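/- arXiv:1706.06439 — 2 statements merged into one kernel-verified Lean document; each statement's English description precedes it below -/
import Mathlib

section
/- Consider a single-cell PSMA system with a finite set M of users, a finite set N of subcarriers, and a fixed codebook c described by an indicator ρ : N → {0,1} with U = Σ_{n∈N} ρ_n > 0. Let g_{m,n} ≥ 0 denote the channel power gain |h_{m,n}|² of user m on subcarrier n, let p_i ≥ 0 be the power allocated to user i on the codebook, let q_i ∈ {0,1} be the codebook assignment indicator of user i, and let w² > 0 be the noise power. Define the average channel gain of user m on the codebook as ĥ_m = (Σ_{n∈N} ρ_n g_{m,n}) / U. Under uniform power allocation across the codebook's subcarriers, i.e. η_n = 1/U for every subcarrier n with ρ_n = 1, the SINR of user m' measured at user m is γ_{m'}(m) = (q_m · (1/U) · p_{m'} · Σ_{n∈N} ρ_n g_{m,n}) / (Σ_{i∈M, ĥ_i > ĥ_{m'}} q_i · (1/U) · p_i · Σ_{n∈N} ρ_n g_{m,n} + w²), and the SINR of user m' at its own receiver is γ_{m'}(m') = (q_{m'} · (1/U) · p_{m'} · Σ_{n∈N} ρ_n g_{m',n}) / (Σ_{i∈M, ĥ_i > ĥ_{m'}} q_i · (1/U)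 · p_i · Σ_{n∈N} ρ_n g_{m',n} + w²). Then for any two users m, m' with ĥ_m ≥ ĥ_{m'}, the SIC (successive interference cancellation) condition γ_{m'}(m) ≥ q_m · γ_{m'}(m') holds. -/
open Classical in
/-- Single-cell PSMA with uniform power allocation: the SIC condition
`γ_{m'}(m) ≥ q_m · γ_{m'}(m')` holds whenever `ĥ_m ≥ ĥ_{m'}`. -/
theorem psma_uniform_power_sic
    {M N : Type*} [Fintype M] [Fintype N]
    (ρ : N → ℝ) (hρ : ∀ n, ρ n = 0 ∨ ρ n = 1)
    (U : ℝ) (hU : U = ∑ n, ρ n) (hUpos : 0 < U)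
    (g : M → N → ℝ) (hg : ∀ m n, 0 ≤ g m n)
    (p : M → ℝ) (hp : ∀ i, 0 ≤ p i)
    (q : M → ℝ) (hq : ∀ i, q i = 0 ∨ q i = 1)
    (w2 : ℝ) (hw : 0 < w2)
    (hhat : M → ℝ) (hhat_def : ∀ m, hhat m = (∑ n, ρ n * g m n) / U)
    (m m' : M) (hord : hhat m' ≤ hhat m) :
    q m * ((q m' * (1 / U) * p m' * ∑ n, ρ n * g m' n) /
        ((∑ i ∈ Finset.univ.filter (fun i => hhat m' < hhat i),
            q i * (1 / U) * p i * ∑ n, ρ n * g m' n) + w2))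
      ≤ (q m * (1 / U) * p m' * ∑ n, ρ n * g m n) /
        ((∑ i ∈ Finset.univ.filter (fun i => hhat m' < hhat i),
            q i * (1 / U) * p i * ∑ n, ρ n * g m n) + w2) := by
  set S : M → ℝ := fun x => ∑ n, ρ n * g x n with hS
  have hSnonneg : ∀ x, 0 ≤ S x := fun x =>
    Finset.sum_nonneg fun n _ => mul_nonneg (by rcases hρ n with h | h <;> simp [h]) (hg x n)
  have hSle : S m' ≤ S m := by
    have h1 := hhat_def m
    have h2 := hhat_def m'
    rw [h1, h2, div_le_div_iff_of_pos_right hUpos] at hord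
    exact hord
  set K : ℝ := ∑ i ∈ Finset.univ.filter (fun i => hhat m' < hhat i),
      q i * (1 / U) * p i with hK
  have hKnonneg : 0 ≤ K := Finset.sum_nonneg fun i _ =>
    mul_nonneg (mul_nonneg (by rcases hq i with h | h <;> simp [h])
      (by positivity)) (hp i)
  have hrw : ∀ x : M, (∑ i ∈ Finset.univ.filter (fun i => hhat m' < hhat i),
      q i * (1 / U) * p i * S x) = K * S x := by
    intro x
    rw [hK, Finset.sum_mul]
  rw [hrw m, hrw m']
  have hd1 : 0 < K * S m' + w2 := add_pos_of_nonneg_of_pos (mul_nonneg hKnonneg (hSnonneg m')) hw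
  have hd2 : 0 < K * S m + w2 := add_pos_of_nonneg_of_pos (mul_nonneg hKnonneg (hSnonneg m)) hw
  rw [mul_div_assoc', div_le_div_iff₀ hd1 hd2]
  have hqm : 0 ≤ q m ∧ q m ≤ 1 := by rcases hq m with h | h <;> simp [h]
  have hqm' : 0 ≤ q m' ∧ q m' ≤ 1 := by rcases hq m' with h | h <;> simp [h]
  have hUinv : 0 < 1 / U := by positivity
  nlinarith [mul_nonneg (mul_nonneg (mul_nonneg hqm.1 hUinv.le) (hp m')) (mul_nonneg hKnonneg (hSnonneg m')),
    mul_nonneg (mul_nonneg hqm.1 hUinv.le) (hp m'),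
    mul_nonneg (mul_nonneg (mul_nonneg hqm.1 hUinv.le) (hp m')) hw.le,
    mul_le_of_le_one_left (mul_nonneg (hSnonneg m') hd2.le) hqm'.2,
    mul_nonneg (mul_nonneg (mul_nonneg hqm.1 hUinv.le) (hp m'))
      (mul_nonneg hKnonneg (mul_nonneg (hSnonneg m) (hSnonneg m'))),
    mul_le_mul_of_nonneg_left (mul_le_mul_of_nonneg_left hSle hw.le)
      (mul_nonneg (mul_nonneg hqm.1 hUinv.le) (hp m'))]
end

section
/- For all real numbers x > 0 and x₀ > 0, setting ξ = x₀/(1 + x₀) and ψ = log(1 + x₀) − (x₀/(1 + x₀))·log(x₀), the inequality ξ·log(x) + ψ ≤ log(1 + x) holds, with equality when x = x₀. -/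
/-! `(1 + x)/(1 + x₀)` is the convex combination of `1` and `x/x₀` with weights `1/(1 + x₀)` and
`ξ = x₀/(1 + x₀)`, so concavity of `log` gives `ξ · log (x/x₀) ≤ log ((1 + x)/(1 + x₀))`, which is
the inequality after expanding both logarithms. -/

open Real

lemma one_add_div_one_add_eq_convex_combination {x x₀ : ℝ} (hx₀ : 0 < x₀) :
    (1 + x) / (1 + x₀) = 1 / (1 + x₀) * 1 + x₀ / (1 + x₀) * (x / x₀) := by
  field_simp

lemma mul_log_div_le_log_one_add_div_one_add {x x₀ : ℝ} (hx : 0 < x) (hx₀ : 0 < x₀) :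
    x₀ / (1 + x₀) * log (x / x₀) ≤ log ((1 + x) / (1 + x₀)) := by
  have hweights : 1 / (1 + x₀) + x₀ / (1 + x₀) = 1 := by field_simp
  have hconcave := strictConcaveOn_log_Ioi.concaveOn.2 (Set.mem_Ioi.2 one_pos)
    (Set.mem_Ioi.2 (div_pos hx hx₀)) (by positivity) (by positivity) hweights
  rw [smul_eq_mul, smul_eq_mul, smul_eq_mul, smul_eq_mul, log_one, mul_zero, zero_add,
    ← one_add_div_one_add_eq_convex_combination hx₀] at hconcave
  exact hconcave

/-- The SCALE inequality: for `x, x₀ > 0`, with `ξ = x₀/(1+x₀)` and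
`ψ = log(1+x₀) - ξ·log(x₀)`, we have `ξ·log x + ψ ≤ log(1+x)`, with equality
when `x = x₀`. -/
theorem scale_inequality
    (x x₀ : ℝ) (hx : 0 < x) (hx₀ : 0 < x₀) :
    (x₀ / (1 + x₀)) * Real.log x
        + (Real.log (1 + x₀) - (x₀ / (1 + x₀)) * Real.log x₀)
      ≤ Real.log (1 + x)
    ∧ (x = x₀ →
        (x₀ / (1 + x₀)) * Real.log x
            + (Real.log (1 + x₀) - (x₀ / (1 + x₀)) * Real.log x₀)
          = Real.log (1 + x)) := by
  refine ⟨?_, fun hxx₀ => by subst hxx₀; ring⟩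
  have h := mul_log_div_le_log_one_add_div_one_add hx hx₀
  rw [log_div hx.ne' hx₀.ne', log_div (by positivity) (by positivity)] at h
  linarith
end
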